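/- Conversely, if b ∈ B is transcendental over a subgroup A ≤ B, then the conjugates A^{b^i}, i ∈ ℤ, generate their free product in B. -/

import Mathlib

/-!
Let `φ : ∗_{i ∈ ℤ} A → A ∗ ℤ` send the `i`-th copy of `A` onto `t⁻ⁱ A tⁱ`, where `t` generates `ℤ`.
Sending `A` onto the `0`-th copy and `t` to `t` defines a map `A ∗ ℤ → (∗_{i ∈ ℤ} A) ⋊ ℤ`, with `ℤ`
acting by shifting indices, and its composite with `φ` is the inclusion of the free product, so `φ`
is injective. The map of the theorem is the transcendence map `A ∗ ℤ → B` composed with `φ`.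
-/

open Monoid

namespace Monoid.CoprodI

variable (G : Type*) [Group G] {T : Type*} [AddGroup T]

def shift (n : T) : CoprodI (fun _ : T => G) ≃* CoprodI (fun _ : T => G) :=
  MonoidHom.toMulEquiv (lift fun i => of (M := fun _ : T => G) (i := i - n))
    (lift fun i => of (M := fun _ : T => G) (i := i + n))
    (ext_hom _ _ fun i => by ext g; simp)
    (ext_hom _ _ fun i => by ext g; simp)

variable {G} in
@[simp]
theorem shift_of (n i : T) (g : G) :
    shift G n (of (M := fun _ : T => G) (i := i) g) = of (i := i - n) g := by
  simp [shift, MonoidHom.toMulEquiv]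

def shiftHom : Multiplicative T →* MulAut (CoprodI fun _ : T => G) :=
  MonoidHom.mk' (fun n => shift G n.toAdd) fun m n =>
    MulEquiv.toMonoidHom_injective <| ext_hom _ _ fun i => by
      ext g
      simp [sub_add_eq_sub_sub_swap]

end Monoid.CoprodI

namespace Monoid.Coprod

variable (G : Type*) [Group G] (T : Type*) [AddGroup T]

def conjInl : CoprodI (fun _ : T => G) →* G ∗ Multiplicative T :=
  CoprodI.lift fun i =>
    (MulAut.conj (inr (Multiplicative.ofAdd (-i)))).toMonoidHom.comp inl

theorem conjInl_injective : Function.Injective (conjInl G T) := by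
  let retraction : G ∗ Multiplicative T →* CoprodI (fun _ : T => G) ⋊[CoprodI.shiftHom G]
      Multiplicative T :=
    lift (SemidirectProduct.inl.comp (CoprodI.of (M := fun _ : T => G) (i := 0)))
      SemidirectProduct.inr
  have retraction_comp : retraction.comp (conjInl G T) = SemidirectProduct.inl := by
    refine CoprodI.ext_hom _ _ fun i => MonoidHom.ext fun g => ?_
    have h_shift : CoprodI.of (M := fun _ : T => G) (i := i) g =
        CoprodI.shiftHom G (Multiplicative.ofAdd (-i)) (CoprodI.of (i := 0) g) := by
      simp [CoprodI.shiftHom]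
    conv_rhs => rw [MonoidHom.comp_apply, h_shift, SemidirectProduct.inl_aut]
    simp [retraction, conjInl]
  refine Function.Injective.of_comp (f := retraction) ?_
  rw [← MonoidHom.coe_comp, retraction_comp]
  exact SemidirectProduct.inl_injective

variable {G T}

theorem lift_comp_conjInl {H : Type*} [Group H] (f : G →* H) (t : Multiplicative T →* H) :
    (lift f t).comp (conjInl G T) =
      CoprodI.lift fun i => (MulAut.conj (t (Multiplicative.ofAdd (-i)))).toMonoidHom.comp f :=
  CoprodI.ext_hom _ _ fun i => MonoidHom.ext fun g => by simp [conjInl]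

end Monoid.Coprod

/-- If `b ∈ B` is transcendental over a subgroup `A ≤ B` (the canonical map
`A * ℤ → B`, identical on `A` and sending the generator of `ℤ` to `b`, is
injective), then the conjugates `A^{bⁱ} = b⁻ⁱ A bⁱ` (`i ∈ ℤ`) generate their
free product in `B`: the canonical map from the free product of copies of `A`
indexed by `ℤ` into `B`, sending the `i`-th copy onto `b⁻ⁱ A bⁱ`, is
injective. -/
theorem free_position_of_transcendental
    {B : Type*} [Group B] (A : Subgroup B) (b : B)
    (htr : Function.Injective
      (Monoid.Coprod.lift A.subtype (zpowersHom B b) :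
        Monoid.Coprod A (Multiplicative ℤ) →* B)) :
    Function.Injective
      (Monoid.CoprodI.lift
        (fun i : ℤ =>
          (MulAut.conj (b ^ (-i))).toMonoidHom.comp A.subtype :
          ∀ i : ℤ, (fun _ : ℤ => A) i →* B)) := by
  have factor := Coprod.lift_comp_conjInl A.subtype (zpowersHom B b)
  simp only [zpowersHom_apply, toAdd_ofAdd] at factor
  rw [← factor]
  exact htr.comp (Coprod.conjInl_injective A ℤ)
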